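/- In the homogeneous latent-variable model (K_i = K, ν ≤ K ≤ 1) with observations X_1,…,X_n and stationary distribution of the joint chain, the normalized log-likelihood difference satisfies the bounded differences property: changing a single observation X_{q̃} to any other value changes Z_π(X_{1:n}) := (1/n)Σ_{q=1}^{n}[log P_π(X_q|X_{q+1:n}) − E[log P_π(X_q|X_{q+1:n})]] by at most (1/n)·Σ_{q=1}^{q̃} ν^{-1}(1−ν)^{q̃−q−1} ≤ c/(ν²n) for a universal constant c. -/

import Mathlib

open MeasureTheory

/-- `betaAux π K x m i v` : conditional probability of observing `x i, …, x (i+m-1)`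
given that the latent variable with index `i` equals `v`, in the model where the
latent variables are i.i.d. with law `π` and `P(X_i = y | V) = K i y V_i V_{i+1}`. -/
noncomputable def betaAux {V 𝕏 : Type*} [MeasurableSpace V] (π : Measure V)
    (K : ℕ → 𝕏 → V → V → ℝ) (x : ℕ → 𝕏) : ℕ → ℕ → V → ℝ
  | 0, _, _ => 1
  | m + 1, i, v => ∫ w, K i (x i) v w * betaAux π K x m (i + 1) w ∂π

/-- Marginal likelihood `P(X_q = x_q, …, X_n = x_n)`. -/
noncomputable def margP {V 𝕏 : Type*} [MeasurableSpace V] (π : Measure V)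
    (K : ℕ → 𝕏 → V → V → ℝ) (x : ℕ → 𝕏) (q n : ℕ) : ℝ :=
  ∫ v, betaAux π K x (n + 1 - q) q v ∂π

/-- Conditional probability `P(X_q = x_q | X_{q+1:n} = x_{q+1:n})`. -/
noncomputable def condP {V 𝕏 : Type*} [MeasurableSpace V] (π : Measure V)
    (K : ℕ → 𝕏 → V → V → ℝ) (x : ℕ → 𝕏) (q n : ℕ) : ℝ :=
  margP π K x q n / margP π K x (q + 1) n

/-!
Write `M(x) = P_π(X_{1:n} = x_{1:n})`. The conditional probabilities multiply to the joint
likelihood, so the sum of their logarithms telescopes to `log M(x)`, and the difference of the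
two sums is `log M(x) - log M(x̃)`. Since `ν ≤ K ≤ 1`, replacing the single factor
`K(x_{q̃}, ·, ·)` of the joint density by `K(x̃_{q̃}, ·, ·)` changes it by a factor in `[ν, ν⁻¹]`,
so `|log M(x) - log M(x̃)| ≤ log ν⁻¹ ≤ ν⁻¹`. The term `q = q̃` of the displayed sum is already
`ν⁻¹`, and the whole sum is at most `ν⁻¹ (1 + ν⁻¹) ≤ 2 ν⁻²` by the geometric series.
-/

open Set Finset Function

section Integral

variable {α : Type*} [MeasurableSpace α] {μ : Measure α} {f : α → ℝ} {a b : ℝ}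

theorem integrable_of_forall_mem_Icc [IsFiniteMeasure μ] (hf : AEStronglyMeasurable f μ)
    (h : ∀ x, f x ∈ Icc a b) : Integrable f μ :=
  .of_bound hf (max |a| |b|) (.of_forall fun x => abs_le_max_abs_abs (h x).1 (h x).2)

theorem integral_mem_Icc_of_forall_mem_Icc [IsProbabilityMeasure μ]
    (hf : AEStronglyMeasurable f μ) (h : ∀ x, f x ∈ Icc a b) : ∫ x, f x ∂μ ∈ Icc a b := by
  have hfi := integrable_of_forall_mem_Icc hf h
  constructor
  · simpa using integral_mono (integrable_const a) hfi fun x => (h x).1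
  · simpa using integral_mono hfi (integrable_const b) fun x => (h x).2

end Integral

section Likelihood

variable {V 𝕏 : Type*} [MeasurableSpace V] {π : Measure V} {K : ℕ → 𝕏 → V → V → ℝ}
  {ν : ℝ} {x xt : ℕ → 𝕏}

theorem measurable_betaAux [SFinite π] (hK : ∀ i y, Measurable (uncurry (K i y)))
    (x : ℕ → 𝕏) : ∀ m i, Measurable (betaAux π K x m i)
  | 0, _ => measurable_const
  | m + 1, i => by
    have h : Measurable fun p : V × V => K i (x i) p.1 p.2 * betaAux π K x m (i + 1) p.2 :=
      (hK i (x i)).mul ((measurable_betaAux hK x m (i + 1)).comp measurable_snd)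
    exact h.stronglyMeasurable.integral_prod_right'.measurable

theorem measurable_kernel_mul_betaAux [SFinite π] (hK : ∀ i y, Measurable (uncurry (K i y)))
    (x : ℕ → 𝕏) (m i : ℕ) (v : V) :
    Measurable fun w => K i (x i) v w * betaAux π K x m (i + 1) w :=
  ((hK i (x i)).comp measurable_prodMk_left).mul (measurable_betaAux hK x m (i + 1))

theorem betaAux_congr :
    ∀ m i, (∀ k, i ≤ k → x k = xt k) → betaAux π K x m i = betaAux π K xt m i
  | 0, _, _ => rfl
  | m + 1, i, h => by
    funext v
    simp only [betaAux, h i le_rfl, betaAux_congr m (i + 1) fun k hk => h k (by omega)]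

variable [IsProbabilityMeasure π]

theorem betaAux_mem_Icc (hK : ∀ i y, Measurable (uncurry (K i y))) (hν : 0 ≤ ν)
    (hKν : ∀ i y v w, K i y v w ∈ Icc ν 1) (x : ℕ → 𝕏) :
    ∀ m i v, betaAux π K x m i v ∈ Icc (ν ^ m) 1
  | 0, _, _ => by simp [betaAux]
  | m + 1, i, v => by
    refine integral_mem_Icc_of_forall_mem_Icc
      (measurable_kernel_mul_betaAux hK x m i v).aestronglyMeasurable fun w => ?_
    obtain ⟨hνK, hK1⟩ := hKν i (x i) v w
    obtain ⟨hνβ, hβ1⟩ := betaAux_mem_Icc hK hν hKν x m (i + 1) w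
    rw [pow_succ']
    exact ⟨mul_le_mul hνK hνβ (by positivity) (hν.trans hνK),
      mul_le_one₀ hK1 ((pow_nonneg hν m).trans hνβ) hβ1⟩

theorem integrable_betaAux (hK : ∀ i y, Measurable (uncurry (K i y))) (hν : 0 ≤ ν)
    (hKν : ∀ i y v w, K i y v w ∈ Icc ν 1) (x : ℕ → 𝕏) (m i : ℕ) :
    Integrable (betaAux π K x m i) π :=
  integrable_of_forall_mem_Icc (measurable_betaAux hK x m i).aestronglyMeasurable
    (betaAux_mem_Icc hK hν hKν x m i)

theorem integrable_kernel_mul_betaAux (hK : ∀ i y, Measurable (uncurry (K i y)))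
    (hν : 0 ≤ ν) (hKν : ∀ i y v w, K i y v w ∈ Icc ν 1) (x : ℕ → 𝕏) (m i : ℕ) (v : V) :
    Integrable (fun w => K i (x i) v w * betaAux π K x m (i + 1) w) π :=
  (integrable_betaAux hK hν hKν x m (i + 1)).bdd_mul
    ((hK i (x i)).comp measurable_prodMk_left).aestronglyMeasurable
    (.of_forall fun w => abs_le.2 ⟨by linarith [(hKν i (x i) v w).1], (hKν i (x i) v w).2⟩)

theorem betaAux_le_inv_mul (hK : ∀ i y, Measurable (uncurry (K i y))) (hν : 0 < ν)
    (hKν : ∀ i y v w, K i y v w ∈ Icc ν 1) {j : ℕ} (hx : ∀ k, k ≠ j → x k = xt k) :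
    ∀ m i v, betaAux π K x m i v ≤ ν⁻¹ * betaAux π K xt m i v
  | 0, _, v => by
    simpa [betaAux] using one_le_inv₀ hν |>.2 ((hKν 0 (x 0) v v).1.trans (hKν 0 (x 0) v v).2)
  | m + 1, i, v => by
    have hK0 : ∀ y w, 0 ≤ K i y v w := fun y w => hν.le.trans (hKν i y v w).1
    have hβ0 : ∀ (z : ℕ → 𝕏) w, 0 ≤ betaAux π K z m (i + 1) w := fun z w =>
      (pow_nonneg hν.le m).trans (betaAux_mem_Icc hK hν.le hKν z m (i + 1) w).1
    have hpoint : ∀ w, K i (x i) v w * betaAux π K x m (i + 1) w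
        ≤ ν⁻¹ * (K i (xt i) v w * betaAux π K xt m (i + 1) w) := fun w => by
      by_cases hij : i = j
      · subst hij
        rw [betaAux_congr m (i + 1) fun k hk => hx k (by omega), ← mul_assoc]
        refine mul_le_mul_of_nonneg_right ((hKν i (x i) v w).2.trans ?_) (hβ0 xt w)
        exact (le_inv_mul_iff₀ hν).2 (by simpa using (hKν i (xt i) v w).1)
      · rw [hx i hij, mul_left_comm]
        exact mul_le_mul_of_nonneg_left (betaAux_le_inv_mul hK hν hKν hx m (i + 1) w)
          (hK0 _ w)
    rw [betaAux, betaAux, ← integral_const_mul]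
    exact integral_mono_of_nonneg (.of_forall fun w => mul_nonneg (hK0 _ w) (hβ0 x w))
      ((integrable_kernel_mul_betaAux hK hν.le hKν xt m i v).const_mul _) (.of_forall hpoint)

theorem margP_pos (hK : ∀ i y, Measurable (uncurry (K i y))) (hν : 0 < ν)
    (hKν : ∀ i y v w, K i y v w ∈ Icc ν 1) (x : ℕ → 𝕏) (q n : ℕ) : 0 < margP π K x q n :=
  (pow_pos hν _).trans_le <| (integral_mem_Icc_of_forall_mem_Icc
    (measurable_betaAux hK x _ q).aestronglyMeasurable (betaAux_mem_Icc hK hν.le hKν x _ q)).1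

theorem margP_le_inv_mul (hK : ∀ i y, Measurable (uncurry (K i y))) (hν : 0 < ν)
    (hKν : ∀ i y v w, K i y v w ∈ Icc ν 1) {j : ℕ} (hx : ∀ k, k ≠ j → x k = xt k)
    (q n : ℕ) : margP π K x q n ≤ ν⁻¹ * margP π K xt q n := by
  rw [margP, margP, ← integral_const_mul]
  exact integral_mono (integrable_betaAux hK hν.le hKν x _ q)
    ((integrable_betaAux hK hν.le hKν xt _ q).const_mul _)
    (betaAux_le_inv_mul hK hν hKν hx _ q)

theorem margP_succ_self (x : ℕ → 𝕏) (n : ℕ) : margP π K x (n + 1) n = 1 := by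
  simp [margP, betaAux]

theorem sum_log_condP {n : ℕ} (hpos : ∀ q, 0 < margP π K x q n) :
    ∑ q ∈ Icc 1 n, Real.log (condP π K x q n) = Real.log (margP π K x 1 n) := by
  rw [← Finset.Ico_add_one_right_eq_Icc]
  calc ∑ q ∈ Ico 1 (n + 1), Real.log (condP π K x q n)
      = -∑ q ∈ Ico 1 (n + 1),
          (Real.log (margP π K x (q + 1) n) - Real.log (margP π K x q n)) := by
        rw [← Finset.sum_neg_distrib]
        refine Finset.sum_congr rfl fun q _ => ?_
        rw [condP, Real.log_div (hpos q).ne' (hpos (q + 1)).ne', neg_sub]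
    _ = Real.log (margP π K x 1 n) := by
        rw [Finset.sum_Ico_sub (fun q => Real.log (margP π K x q n)) (by omega),
          margP_succ_self, Real.log_one, zero_sub, neg_neg]

end Likelihood

theorem abs_log_sub_log_le {a b c : ℝ} (ha : 0 < a) (hb : 0 < b) (hab : a ≤ c * b)
    (hba : b ≤ c * a) : |Real.log a - Real.log b| ≤ Real.log c := by
  have hc : 0 < c := pos_of_mul_pos_left (ha.trans_le hab) hb.le
  have h₁ := Real.log_le_log ha hab
  have h₂ := Real.log_le_log hb hba
  rw [Real.log_mul hc.ne' hb.ne'] at h₁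
  rw [Real.log_mul hc.ne' ha.ne'] at h₂
  exact abs_sub_le_iff.2 ⟨by linarith, by linarith⟩

section GeometricWeights

variable {r : ℝ} {t : ℕ}

theorem one_le_sum_Icc_pow_tsub (hr : 0 ≤ r) (ht : 1 ≤ t) :
    1 ≤ ∑ q ∈ Icc 1 t, r ^ (t - q - 1) := by
  simpa using Finset.single_le_sum (fun q _ => pow_nonneg hr (t - q - 1))
    (Finset.mem_Icc.2 ⟨ht, le_rfl⟩)

theorem sum_Icc_pow_tsub_le (hr₀ : 0 ≤ r) (hr₁ : r < 1) (t : ℕ) :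
    ∑ q ∈ Icc 1 t, r ^ (t - q - 1) ≤ 1 + (1 - r)⁻¹ := by
  rcases t with _ | s
  · have := sub_pos.2 hr₁
    simp only [Finset.Icc_eq_empty_of_lt zero_lt_one, Finset.sum_empty]
    positivity
  have hgeom : ∑ q ∈ Icc 1 s, r ^ (s + 1 - q - 1) = ∑ k ∈ range s, r ^ k := by
    rw [← Finset.Ico_add_one_right_eq_Icc, Finset.sum_Ico_eq_sum_range, add_tsub_cancel_right,
      ← Finset.sum_range_reflect (fun k => r ^ k)]
    exact Finset.sum_congr rfl fun k _ => by congr 1; omega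
  have hle : ∑ k ∈ range s, r ^ k ≤ (1 - r)⁻¹ := by
    have := geom_sum_Ico_le_of_lt_one (m := 0) (n := s) hr₀ hr₁
    rwa [pow_zero, one_div, ← Finset.range_eq_Ico] at this
  rw [← Finset.Ico_add_one_right_eq_Icc, Finset.sum_Ico_succ_top (by omega),
    Finset.Ico_add_one_right_eq_Icc, hgeom, tsub_self, Nat.zero_sub, pow_zero]
  linarith

end GeometricWeights

/-- Bounded differences property of the normalized log-likelihood: since the
expectation terms of `Z_π` cancel, changing one observation changes
`Z_π(X_{1:n}) = (1/n) Σ_q [log P_π(X_q|X_{q+1:n}) − E log P_π(X_q|X_{q+1:n})]`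
by exactly the displayed quantity. -/
theorem Z_bounded_difference :
    ∃ c > (0 : ℝ),
      ∀ (V 𝕏 : Type) (_ : MeasurableSpace V) (_ : Countable 𝕏)
        (π : Measure V), IsProbabilityMeasure π →
      ∀ (K : 𝕏 → V → V → ℝ) (ν : ℝ),
        (∀ y : 𝕏, Measurable fun p : V × V => K y p.1 p.2) →
        (∀ v w : V, HasSum (fun y : 𝕏 => K y v w) 1) →
        0 < ν → ν ≤ 1 →
        (∀ (y : 𝕏) (v w : V), ν ≤ K y v w) →
        (∀ (y : 𝕏) (v w : V), K y v w ≤ 1) →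
      ∀ (x xt : ℕ → 𝕏) (n qt : ℕ), 1 ≤ qt → qt ≤ n →
        (∀ k, k ≠ qt → xt k = x k) →
        |(1 / (n : ℝ)) * ∑ q ∈ Finset.Icc 1 n,
            (Real.log (condP π (fun _ => K) x q n)
              - Real.log (condP π (fun _ => K) xt q n))|
          ≤ (1 / (n : ℝ)) * ∑ q ∈ Finset.Icc 1 qt, ν⁻¹ * (1 - ν) ^ (qt - q - 1) ∧
        (1 / (n : ℝ)) * ∑ q ∈ Finset.Icc 1 qt, ν⁻¹ * (1 - ν) ^ (qt - q - 1)
          ≤ c / (ν ^ 2 * n) := by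
  refine ⟨2, two_pos, ?_⟩
  intro V 𝕏 _ _ π _ K ν hKm _ hν hν1 hKν hK1 x xt n qt hqt _ hx
  have hK : ∀ (i : ℕ) y, Measurable (uncurry ((fun _ => K) i y)) := fun _ => hKm
  have hKI : ∀ (i : ℕ) y v w, (fun _ => K) i y v w ∈ Icc ν 1 :=
    fun _ y v w => ⟨hKν y v w, hK1 y v w⟩
  have hdiff := abs_log_sub_log_le (margP_pos (π := π) hK hν hKI x 1 n)
    (margP_pos hK hν hKI xt 1 n)
    (margP_le_inv_mul hK hν hKI (fun k hk => (hx k hk).symm) 1 n)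
    (margP_le_inv_mul hK hν hKI hx 1 n)
  rw [Finset.sum_sub_distrib, sum_log_condP (margP_pos hK hν hKI x · n),
    sum_log_condP (margP_pos hK hν hKI xt · n), abs_mul, abs_of_nonneg (by positivity),
    ← Finset.mul_sum]
  have hinv : 1 ≤ ν⁻¹ := (one_le_inv₀ hν).2 hν1
  have hsum := sum_Icc_pow_tsub_le (by linarith) (by linarith : 1 - ν < 1) qt
  rw [sub_sub_cancel] at hsum
  constructor
  · gcongr
    calc _ ≤ Real.log ν⁻¹ := hdiff
      _ ≤ ν⁻¹ := Real.log_le_self (by positivity)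
      _ ≤ ν⁻¹ * ∑ q ∈ Icc 1 qt, (1 - ν) ^ (qt - q - 1) :=
        le_mul_of_one_le_right (by positivity) (one_le_sum_Icc_pow_tsub (by linarith) hqt)
  · calc 1 / (n : ℝ) * (ν⁻¹ * ∑ q ∈ Icc 1 qt, (1 - ν) ^ (qt - q - 1))
        ≤ 1 / n * (ν⁻¹ * (ν⁻¹ + ν⁻¹)) := by gcongr; linarith
      _ = 2 / (ν ^ 2 * n) := by field_simp; ring
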